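/- With F a lift of Frobenius on ℙ^N defined over ℤ_p and σ a Galois lift of the q-power Frobenius, the set of F-periodic points in ℙ^N(overline{ℚ_p}) equals the equalizer of F and σ: Per = {x ∈ ℙ^N(overline{ℚ_p}) : F(x) = σ(x)}, where σ acts on ℙ^N(overline{ℚ_p}) coordinatewise. -/

import Mathlib

open scoped LinearAlgebra.Projectivization
open MvPolynomial

/-- A homogeneous polynomial vanishes at a projective point (tested on any representative). -/
def VanishesAt {K : Type*} [Field K] {N : ℕ} (H : MvPolynomial (Fin (N + 1)) K)
    (x : ℙ K (Fin (N + 1) → K)) : Prop :=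
  ∀ (v : Fin (N + 1) → K) (hv : v ≠ 0), x = Projectivization.mk K v hv →
    MvPolynomial.eval v H = 0

/-- A subvariety of `ℙ^N` is the common zero set of finitely many homogeneous polynomials. -/
def IsSubvariety {K : Type*} [Field K] {N : ℕ} (V : Set (ℙ K (Fin (N + 1) → K))) : Prop :=
  ∃ (m : ℕ) (H : Fin m → MvPolynomial (Fin (N + 1)) K),
    (∀ j, ∃ d, (H j).IsHomogeneous d) ∧ V = {x | ∀ j, VanishesAt (H j) x}

/-- `S` is Zariski dense in `V`: `S ⊆ V` and every homogeneous polynomial vanishing on `S`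
vanishes on `V`. -/
def ZariskiDenseIn {K : Type*} [Field K] {N : ℕ} (S V : Set (ℙ K (Fin (N + 1) → K))) : Prop :=
  S ⊆ V ∧ ∀ (H : MvPolynomial (Fin (N + 1)) K) (d : ℕ), H.IsHomogeneous d →
    (∀ x ∈ S, VanishesAt H x) → ∀ x ∈ V, VanishesAt H x


/-!
Since `P` has coefficients in `ℤ_p`, `F` commutes with `σ`. If `F x = σ x`, then
`F^[n] x = σ^[n] x` for all `n`, and `σ` has finite orbits, since it permutes the roots of the
minimal polynomials over `ℚ_p` of the coordinates of `x`; so `x` is periodic.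

Conversely, on a normalized representative `w` of `x` (integral coordinates, one of them a unit),
`F` and `σ` agree modulo `{|z| ≤ δ}` for some `|p| ≤ δ < 1`, and `F` contracts: integral vectors
congruent modulo `δ ^ k` have images congruent modulo `δ ^ (k + 1)`. If `F^[n] x = x`, then `F x`
and `σ x` are both fixed by `F^[n]`; applying `F^[n * k]` shows that the `2 × 2` minors of their
normalized representatives have absolute value at most `δ ^ k` for every `k`, so they vanish.
-/

namespace IsNonarchimedean

variable {R : Type*} [CommRing R] {v : AbsoluteValue R ℝ}

theorem apply_sub_le (hv : IsNonarchimedean v) (x y : R) : v (x - y) ≤ max (v x) (v y) := by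
  simpa [sub_eq_add_neg] using hv x (-y)

theorem apply_sum_le_of_forall_le (hv : IsNonarchimedean v) {ι : Type*} {s : Finset ι}
    {f : ι → R} {B : ℝ} (hB : 0 ≤ B) (h : ∀ i ∈ s, v (f i) ≤ B) : v (∑ i ∈ s, f i) ≤ B := by
  rcases s.eq_empty_or_nonempty with rfl | hs
  · simpa using hB
  · exact (hv.apply_sum_le_sup hs).trans (Finset.sup'_le hs _ h)

theorem apply_mul_sub_mul_le (hv : IsNonarchimedean v) {ι : Type*} {a b : ι → R} {ε : ℝ}
    (ha : ∀ i, v (a i) ≤ 1) (hab : ∀ i, v (a i - b i) ≤ ε) (i j : ι) :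
    v (a i * b j - a j * b i) ≤ ε := by
  have hε : 0 ≤ ε := (v.nonneg _).trans (hab i)
  rw [show a i * b j - a j * b i = a j * (a i - b i) - a i * (a j - b j) by ring]
  refine (hv.apply_sub_le _ _).trans (max_le ?_ ?_) <;> rw [map_mul]
  · exact (mul_le_mul_of_nonneg_left (hab i) (v.nonneg _)).trans (mul_le_of_le_one_left hε (ha j))
  · exact (mul_le_mul_of_nonneg_left (hab j) (v.nonneg _)).trans (mul_le_of_le_one_left hε (ha i))

variable [Nontrivial R]

theorem apply_pow_sub_pow_le (hv : IsNonarchimedean v) {a b : R} (ha : v a ≤ 1) (hb : v b ≤ 1)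
    (n : ℕ) : v (a ^ n - b ^ n) ≤ v (a - b) := by
  rw [← geom_sum₂_mul, map_mul]
  refine mul_le_of_le_one_left (v.nonneg _) (hv.apply_sum_le_of_forall_le zero_le_one ?_)
  intro i _
  rw [map_mul, map_pow, map_pow]
  exact mul_le_one₀ (pow_le_one₀ (v.nonneg _) ha) (pow_nonneg (v.nonneg _) _)
    (pow_le_one₀ (v.nonneg _) hb)

theorem apply_prod_sub_prod_le (hv : IsNonarchimedean v) {ι : Type*} (s : Finset ι)
    {a b : ι → R} {ε : ℝ} (hε : 0 ≤ ε) (ha : ∀ i, v (a i) ≤ 1) (hb : ∀ i, v (b i) ≤ 1)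
    (hab : ∀ i, v (a i - b i) ≤ ε) : v (∏ i ∈ s, a i - ∏ i ∈ s, b i) ≤ ε := by
  classical
  induction s using Finset.induction_on with
  | empty => simpa using hε
  | insert j s hj ih =>
    have hbs : v (∏ i ∈ s, b i) ≤ 1 := by
      rw [map_prod]
      exact Finset.prod_le_one (fun i _ => v.nonneg _) fun i _ => hb i
    rw [Finset.prod_insert hj, Finset.prod_insert hj,
      show a j * ∏ i ∈ s, a i - b j * ∏ i ∈ s, b i
        = a j * (∏ i ∈ s, a i - ∏ i ∈ s, b i) + (a j - b j) * ∏ i ∈ s, b i by ring]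
    refine (hv _ _).trans (max_le ?_ ?_) <;> rw [map_mul]
    · exact (mul_le_mul_of_nonneg_left ih (v.nonneg _)).trans (mul_le_of_le_one_left hε (ha j))
    · exact (mul_le_mul_of_nonneg_right (hab j) (v.nonneg _)).trans (mul_le_of_le_one_right hε hbs)

theorem apply_eval_le (hv : IsNonarchimedean v) {ι : Type*} [Fintype ι] {P : MvPolynomial ι R}
    (hP : ∀ m, v (P.coeff m) ≤ 1) {w : ι → R} (hw : ∀ i, v (w i) ≤ 1) : v (eval w P) ≤ 1 := by
  rw [eval_eq']
  refine hv.apply_sum_le_of_forall_le zero_le_one fun d _ => ?_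
  rw [map_mul, map_prod]
  exact mul_le_one₀ (hP d) (Finset.prod_nonneg fun i _ => v.nonneg _)
    (Finset.prod_le_one (fun i _ => v.nonneg _) fun i _ => by
      rw [map_pow]; exact pow_le_one₀ (v.nonneg _) (hw i))

theorem apply_eval_sub_eval_le (hv : IsNonarchimedean v) {ι : Type*} [Fintype ι]
    {P : MvPolynomial ι R} (hP : ∀ m, v (P.coeff m) ≤ 1) {w u : ι → R}
    (hw : ∀ i, v (w i) ≤ 1) (hu : ∀ i, v (u i) ≤ 1) {ε : ℝ} (hε : 0 ≤ ε)
    (hwu : ∀ i, v (w i - u i) ≤ ε) : v (eval w P - eval u P) ≤ ε := by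
  have hpow {x : R} (hx : v x ≤ 1) (n : ℕ) : v (x ^ n) ≤ 1 := by
    rw [map_pow]; exact pow_le_one₀ (v.nonneg _) hx
  rw [eval_eq', eval_eq', ← Finset.sum_sub_distrib]
  refine hv.apply_sum_le_of_forall_le hε fun d _ => ?_
  rw [← mul_sub, map_mul]
  refine mul_le_of_le_one_left hε (hP d) |>.trans' (mul_le_mul_of_nonneg_left ?_ (v.nonneg _))
  exact hv.apply_prod_sub_prod_le _ hε (fun i => hpow (hw i) _) (fun i => hpow (hu i) _)
    fun i => (hv.apply_pow_sub_pow_le (hw i) (hu i) _).trans (hwu i)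

/-- The binomial coefficients `(p ^ s).choose k` with `0 < k < p ^ s` are divisible by `p`. -/
theorem apply_pow_prime_pow_sub_pow_le (hv : IsNonarchimedean v) {p : ℕ} (hp : p.Prime)
    {s : ℕ} (hs : s ≠ 0) {a b : R} (ha : v a ≤ 1) (hb : v b ≤ 1) :
    v (a ^ p ^ s - b ^ p ^ s) ≤ v (a - b) * max (v (a - b)) (v p) := by
  obtain ⟨d, rfl⟩ : ∃ d, a = d + b := ⟨a - b, (sub_add_cancel a b).symm⟩
  rw [add_sub_cancel_right]
  set q := p ^ s
  have hq1 : 1 < q := Nat.one_lt_pow hs hp.one_lt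
  have hd1 : v d ≤ 1 := by simpa using (hv.apply_sub_le (d + b) b).trans (max_le ha hb)
  have hexp : (d + b) ^ q - b ^ q = ∑ k ∈ Finset.range q, d ^ (k + 1) * b ^ (q - (k + 1)) *
      (q.choose (k + 1) : R) := by
    rw [add_pow, Finset.sum_range_succ']
    simp
  rw [hexp]
  refine hv.apply_sum_le_of_forall_le (mul_nonneg (v.nonneg _) ((v.nonneg _).trans
    (le_max_left _ _))) fun k hk => ?_
  rw [map_mul, map_mul, map_pow, map_pow]
  rcases (Nat.succ_le_of_lt (Finset.mem_range.mp hk)).eq_or_lt with hkq | hkq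
  · rw [← hkq, Nat.choose_self, Nat.sub_self, pow_zero, Nat.cast_one, map_one, mul_one, mul_one,
      pow_succ']
    exact mul_le_mul_of_nonneg_left ((pow_le_of_le_one (v.nonneg _) hd1 (by omega)).trans
      (le_max_left _ _)) (v.nonneg _)
  · obtain ⟨m, hm⟩ := hp.dvd_choose_pow k.succ_ne_zero hkq.ne
    rw [hm, Nat.cast_mul, map_mul, pow_succ']
    have hm1 : v (m : R) ≤ 1 := hv.apply_natCast_le_one
    have hdk : v d ^ k ≤ 1 := pow_le_one₀ (v.nonneg _) hd1
    have hbk : v b ^ (q - (k + 1)) ≤ 1 := pow_le_one₀ (v.nonneg _) hb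
    calc v d * v d ^ k * v b ^ (q - (k + 1)) * (v p * v m)
        ≤ v d * 1 * 1 * (v p * 1) := by gcongr
      _ ≤ v d * max (v d) (v p) := by
        rw [mul_one, mul_one, mul_one]
        exact mul_le_mul_of_nonneg_left (le_max_right _ _) (v.nonneg _)

end IsNonarchimedean

def IsNormalized {R ι : Type*} [Semiring R] (v : AbsoluteValue R ℝ) (w : ι → R) : Prop :=
  (∀ i, v (w i) ≤ 1) ∧ ∃ i, v (w i) = 1

noncomputable def frobeniusLift {R ι : Type*} [CommRing R] (p s : ℕ)
    (P : ι → MvPolynomial ι R) (w : ι → R) : ι → R :=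
  fun i => w i ^ p ^ s + p * eval w (P i)

theorem map_frobeniusLift {R ι F : Type*} [CommRing R] [FunLike F R R] [RingHomClass F R R] (σ : F)
    {p s : ℕ} {P : ι → MvPolynomial ι R}
    (hσ : ∀ i m, σ ((P i).coeff m) = (P i).coeff m) (w : ι → R) :
    (fun i => σ (frobeniusLift p s P w i)) = frobeniusLift p s P (fun i => σ (w i)) := by
  have hP : ∀ i, map (σ : R →+* R) (P i) = P i := fun i =>
    MvPolynomial.ext _ _ fun m => by rw [coeff_map, RingHom.coe_coe, hσ]
  funext i
  rw [frobeniusLift, frobeniusLift, map_add, map_mul, map_pow, map_natCast, ← RingHom.coe_coe σ,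
    eval₂_comp, eval₂_eq_eval_map, hP]
  rfl

theorem comp_ne_zero_of_injective {α β ι F : Type*} [Zero α] [Zero β] [FunLike F α β]
    [ZeroHomClass F α β] {σ : F} (hσ : Function.Injective σ) {w : ι → α} (hw : w ≠ 0) :
    (fun i => σ (w i)) ≠ 0 :=
  fun h => hw (funext fun i => hσ (by simpa using congrFun h i))

theorem IsNormalized.ne_zero {R ι : Type*} [Semiring R] {v : AbsoluteValue R ℝ} {w : ι → R}
    (hw : IsNormalized v w) : w ≠ 0 := by
  rintro rfl
  obtain ⟨i, hi⟩ := hw.2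
  simp at hi

theorem IsNormalized.comp_of_abv_sub_pow_lt_one {R ι : Type*} [CommRing R] [Nontrivial R]
    {v : AbsoluteValue R ℝ} (hv : IsNonarchimedean v) {σ : R → R} {q : ℕ}
    (hσ : ∀ x, v x ≤ 1 → v (σ x - x ^ q) < 1) {w : ι → R} (hw : IsNormalized v w) :
    IsNormalized v (fun i => σ (w i)) := by
  have hσx (x : R) : σ x = x ^ q + (σ x - x ^ q) := (add_sub_cancel _ _).symm
  refine ⟨fun i => ?_, ?_⟩
  · show v (σ (w i)) ≤ 1
    rw [hσx]
    refine (hv _ _).trans (max_le ?_ (hσ _ (hw.1 i)).le)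
    rw [map_pow]
    exact pow_le_one₀ (v.nonneg _) (hw.1 i)
  · obtain ⟨i, hi⟩ := hw.2
    have hpow : v (w i ^ q) = 1 := by rw [map_pow, hi, one_pow]
    exact ⟨i, show v (σ (w i)) = 1 by rw [hσx, hv.add_eq_left_of_lt (hpow ▸ hσ _ hi.le), hpow]⟩

section FrobeniusLift

variable {R ι : Type*} [CommRing R] [Nontrivial R] [Fintype ι] {v : AbsoluteValue R ℝ}
  {p s : ℕ} {P : ι → MvPolynomial ι R}

theorem abv_frobeniusLift_le (hv : IsNonarchimedean v) (hP : ∀ i m, v ((P i).coeff m) ≤ 1)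
    {w : ι → R} (hw : ∀ i, v (w i) ≤ 1) (i : ι) : v (frobeniusLift p s P w i) ≤ 1 := by
  refine (hv _ _).trans (max_le ?_ ?_)
  · rw [map_pow]
    exact pow_le_one₀ (v.nonneg _) (hw i)
  · rw [map_mul]
    exact mul_le_one₀ hv.apply_natCast_le_one (v.nonneg _) (hv.apply_eval_le (hP i) hw)

theorem isNormalized_frobeniusLift (hv : IsNonarchimedean v) (hP : ∀ i m, v ((P i).coeff m) ≤ 1)
    (hvp : v p < 1) {w : ι → R} (hw : IsNormalized v w) :
    IsNormalized v (frobeniusLift p s P w) := by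
  refine ⟨abv_frobeniusLift_le hv hP hw.1, ?_⟩
  obtain ⟨i, hi⟩ := hw.2
  have hpow : v (w i ^ p ^ s) = 1 := by rw [map_pow, hi, one_pow]
  have hsmall : v (p * eval w (P i)) < 1 := by
    rw [map_mul]
    exact mul_lt_one_of_nonneg_of_lt_one_left (v.nonneg _) hvp (hv.apply_eval_le (hP i) hw.1)
  exact ⟨i, (hv.add_eq_left_of_lt (hpow ▸ hsmall)).trans hpow⟩

theorem abv_frobeniusLift_sub_le (hv : IsNonarchimedean v) (hp : p.Prime) (hs : s ≠ 0)
    (hP : ∀ i m, v ((P i).coeff m) ≤ 1) {w u : ι → R} (hw : ∀ i, v (w i) ≤ 1)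
    (hu : ∀ i, v (u i) ≤ 1) {ε : ℝ} (hwu : ∀ i, v (w i - u i) ≤ ε) (i : ι) :
    v (frobeniusLift p s P w i - frobeniusLift p s P u i) ≤ ε * max ε (v p) := by
  have hε : 0 ≤ ε := (v.nonneg _).trans (hwu i)
  rw [frobeniusLift, frobeniusLift, add_sub_add_comm, ← mul_sub]
  refine (hv _ _).trans (max_le ?_ ?_)
  · refine (hv.apply_pow_prime_pow_sub_pow_le hp hs (hw i) (hu i)).trans ?_
    gcongr <;> exact hwu i
  · rw [map_mul, mul_comm]
    exact mul_le_mul (hv.apply_eval_sub_eval_le (hP i) hw hu hε hwu) (le_max_right _ _)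
      (v.nonneg _) hε

theorem abv_iterate_frobeniusLift_sub_le (hv : IsNonarchimedean v) (hp : p.Prime) (hs : s ≠ 0)
    (hP : ∀ i m, v ((P i).coeff m) ≤ 1) {w u : ι → R} (hw : ∀ i, v (w i) ≤ 1)
    (hu : ∀ i, v (u i) ≤ 1) {δ : ℝ} (hpδ : v p ≤ δ) (hδ : δ ≤ 1)
    (hwu : ∀ i, v (w i - u i) ≤ δ) (k : ℕ) (i : ι) :
    v ((frobeniusLift p s P)^[k] w i - (frobeniusLift p s P)^[k] u i) ≤ δ ^ (k + 1) := by
  have hδ0 : 0 ≤ δ := (v.nonneg _).trans hpδ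
  have hint {x : ι → R} (hx : ∀ i, v (x i) ≤ 1) (k : ℕ) :
      ∀ i, v ((frobeniusLift p s P)^[k] x i) ≤ 1 :=
    Function.Iterate.rec _ hx (fun _ => abv_frobeniusLift_le hv hP) k
  induction k generalizing i with
  | zero => simpa using hwu i
  | succ k ih =>
    rw [Function.iterate_succ_apply', Function.iterate_succ_apply']
    refine (abv_frobeniusLift_sub_le hv hp hs hP (hint hw k) (hint hu k) ih i).trans ?_
    rw [pow_succ δ (k + 1)]
    refine mul_le_mul_of_nonneg_left ?_ (pow_nonneg hδ0 _)
    exact max_le (pow_le_of_le_one hδ0 hδ k.succ_ne_zero) hpδ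

theorem exists_abv_frobeniusLift_sub_le [Nonempty ι] (hv : IsNonarchimedean v)
    (hP : ∀ i m, v ((P i).coeff m) ≤ 1) (hvp : v p < 1) {σ : R → R}
    (hσ : ∀ x, v x ≤ 1 → v (σ x - x ^ p ^ s) < 1) {w : ι → R} (hw : ∀ i, v (w i) ≤ 1) :
    ∃ δ, v p ≤ δ ∧ δ < 1 ∧ ∀ i, v (frobeniusLift p s P w i - σ (w i)) ≤ δ := by
  obtain ⟨j, hj⟩ := Finite.exists_max fun i => v (σ (w i) - w i ^ p ^ s)
  refine ⟨max (v p) (v (σ (w j) - w j ^ p ^ s)), le_max_left _ _, max_lt hvp (hσ _ (hw j)),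
    fun i => ?_⟩
  rw [frobeniusLift, show w i ^ p ^ s + p * eval w (P i) - σ (w i)
    = p * eval w (P i) - (σ (w i) - w i ^ p ^ s) by ring]
  refine (hv.apply_sub_le _ _).trans (max_le_max ?_ (hj i))
  rw [map_mul]
  exact mul_le_of_le_one_right (v.nonneg _) (hv.apply_eval_le (hP i) hw)

end FrobeniusLift

theorem Set.MapsTo.mem_periodicPts {α : Type*} {f : α → α} {s : Set α} (h : Set.MapsTo f s s)
    (hs : s.Finite) (hf : Set.InjOn f s) {x : α} (hx : x ∈ s) : x ∈ Function.periodicPts f := by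
  have := hs.to_subtype
  exact Function.Semiconj.mapsTo_periodicPts (g := Subtype.val) (fun _ => rfl)
    ((h.restrict_inj.2 hf).mem_periodicPts ⟨x, hx⟩)

theorem AlgEquiv.mem_periodicPts_comp {K L ι : Type*} [Field K] [Field L] [Algebra K L]
    [Algebra.IsAlgebraic K L] [Finite ι] (σ : L ≃ₐ[K] L) (w : ι → L) :
    w ∈ Function.periodicPts fun (u : ι → L) i => σ (u i) := by
  refine Set.MapsTo.mem_periodicPts (s := Set.univ.pi fun i => (minpoly K (w i)).rootSet L)
    (fun u hu i _ => ?_) (Set.Finite.pi fun i => Polynomial.rootSet_finite _ _)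
    (fun u _ u' _ h => funext fun i => σ.injective (congrFun h i)) fun i _ => ?_
  · obtain ⟨hne, hroot⟩ := Polynomial.mem_rootSet.1 (hu i trivial)
    exact Polynomial.mem_rootSet.2 ⟨hne, by rw [Polynomial.aeval_algHom_apply, hroot, map_zero]⟩
  · exact Polynomial.mem_rootSet.2
      ⟨minpoly.ne_zero (Algebra.IsIntegral.isIntegral _), minpoly.aeval _ _⟩

namespace Projectivization

section Iterate

variable {K V : Type*} [DivisionRing K] [AddCommGroup V] [Module K V]

theorem iterate_map_mk {G : ℙ K V → ℙ K V} {g : V → V} (hg : ∀ w, w ≠ 0 → g w ≠ 0)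
    (hG : ∀ w (hw : w ≠ 0), G (mk K w hw) = mk K (g w) (hg w hw)) (n : ℕ) {w : V}
    (hw : w ≠ 0) (hw' : g^[n] w ≠ 0) : G^[n] (mk K w hw) = mk K (g^[n] w) hw' := by
  induction n generalizing w with
  | zero => rfl
  | succ n ih =>
    rw [Function.iterate_succ_apply, hG]
    exact ih (hg w hw) hw'

theorem commute_of_map_mk {G H : ℙ K V → ℙ K V} {g h : V → V} (hg : ∀ w, w ≠ 0 → g w ≠ 0)
    (hG : ∀ w (hw : w ≠ 0), G (mk K w hw) = mk K (g w) (hg w hw))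
    (hh : ∀ w, w ≠ 0 → h w ≠ 0) (hH : ∀ w (hw : w ≠ 0), H (mk K w hw) = mk K (h w) (hh w hw))
    (hgh : ∀ w, g (h w) = h (g w)) : Function.Commute G H := by
  intro x
  rw [← x.mk_rep, hH, hG, hG, hH]
  congr 1
  exact hgh _

end Iterate

theorem mem_periodicPts_of_map_eq {K L ι : Type*} [Field K] [Field L] [Algebra K L]
    [Algebra.IsAlgebraic K L] [Finite ι] (σ : L ≃ₐ[K] L) {G H : ℙ L (ι → L) → ℙ L (ι → L)}
    (hH : ∀ w (hw : w ≠ 0) (hw' : (fun i => σ (w i)) ≠ 0),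
      H (mk L w hw) = mk L (fun i => σ (w i)) hw')
    (hGH : Function.Commute G H) {x : ℙ L (ι → L)} (hx : G x = H x) :
    x ∈ Function.periodicPts G := by
  have hσ := fun w (hw : w ≠ 0) => comp_ne_zero_of_injective (ι := ι) σ.injective hw
  obtain ⟨n, hn, hxn⟩ := Function.mem_periodicPts.1 (σ.mem_periodicPts_comp x.rep)
  refine Function.mem_periodicPts.2 ⟨n, hn, ?_⟩
  rw [Function.IsPeriodicPt, Function.IsFixedPt, hGH.iterate_eq_of_map_eq n hx, ← x.mk_rep,
    iterate_map_mk hσ (fun w hw => hH w hw _) n _ (hxn.eq.symm ▸ x.rep_nonzero)]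
  congr 1

variable {K ι : Type*} [Field K]

theorem mk_eq_mk_of_mul_eq_mul {a b : ι → K} (ha : a ≠ 0) (hb : b ≠ 0)
    (h : ∀ i j, a i * b j = a j * b i) : mk K a ha = mk K b hb := by
  obtain ⟨j, hj⟩ := Function.ne_iff.mp hb
  rw [mk_eq_mk_iff']
  refine ⟨a j / b j, funext fun i => ?_⟩
  rw [Pi.smul_apply, smul_eq_mul, div_mul_eq_mul_div, ← h i j, mul_div_assoc, div_self hj,
    mul_one]

theorem exists_isNormalized_rep [Finite ι] (v : AbsoluteValue K ℝ) (x : ℙ K (ι → K)) :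
    ∃ (w : ι → K) (hw : w ≠ 0), mk K w hw = x ∧ IsNormalized v w := by
  obtain ⟨j, hj⟩ := Function.ne_iff.mp x.rep_nonzero
  have : Nonempty ι := ⟨j⟩
  obtain ⟨i, hi⟩ := Finite.exists_max fun i => v (x.rep i)
  have hri : x.rep i ≠ 0 := fun h0 =>
    hj (v.eq_zero.mp (le_antisymm (by simpa [h0] using hi j) (v.nonneg _)))
  have hw : IsNormalized v ((x.rep i)⁻¹ • x.rep) := by
    refine ⟨fun k => ?_, i, ?_⟩ <;> simp only [Pi.smul_apply, smul_eq_mul, map_mul, map_inv₀]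
    · exact (inv_mul_le_one₀ (v.pos hri)).2 (hi k)
    · exact inv_mul_cancel₀ (v.pos hri).ne'
  exact ⟨_, hw.ne_zero, ((mk_eq_mk_iff' K _ _ _ _).2 ⟨_, rfl⟩).trans x.mk_rep, hw⟩

end Projectivization

section Projective

open Projectivization

variable {K ι : Type*} [Field K] {v : AbsoluteValue K ℝ}

theorem IsNormalized.exists_abv_eq_one_of_mk_eq {a b : ι → K} (ha : IsNormalized v a)
    (hb : IsNormalized v b) (h : mk K a ha.ne_zero = mk K b hb.ne_zero) :
    ∃ c, v c = 1 ∧ b = c • a := by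
  obtain ⟨c, rfl⟩ := (mk_eq_mk_iff' K b a hb.ne_zero ha.ne_zero).1 h.symm
  obtain ⟨i, hi⟩ := ha.2
  obtain ⟨j, hj⟩ := hb.2
  have hci : v c * v (a i) ≤ 1 := by simpa using hb.1 i
  have hcj : v c * v (a j) = 1 := by simpa using hj
  refine ⟨c, le_antisymm (by rwa [hi, mul_one] at hci) ?_, rfl⟩
  exact hcj.symm.le.trans (mul_le_of_le_one_right (v.nonneg c) (ha.1 j))

theorem abv_mul_sub_mul_eq_of_mk_eq {a a' b b' : ι → K} (ha : IsNormalized v a)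
    (ha' : IsNormalized v a') (hb : IsNormalized v b) (hb' : IsNormalized v b')
    (haa' : mk K a ha.ne_zero = mk K a' ha'.ne_zero)
    (hbb' : mk K b hb.ne_zero = mk K b' hb'.ne_zero) (i j : ι) :
    v (a' i * b' j - a' j * b' i) = v (a i * b j - a j * b i) := by
  obtain ⟨c, hc, rfl⟩ := ha.exists_abv_eq_one_of_mk_eq ha' haa'
  obtain ⟨d, hd, rfl⟩ := hb.exists_abv_eq_one_of_mk_eq hb' hbb'
  simp only [Pi.smul_apply, smul_eq_mul]
  rw [show c * a i * (d * b j) - c * a j * (d * b i) = c * d * (a i * b j - a j * b i) by ring,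
    map_mul, map_mul, hc, hd, one_mul, one_mul]

theorem eq_of_isPeriodicPt_of_abv_sub_le [Fintype ι] (hv : IsNonarchimedean v) {p s : ℕ}
    (hp : p.Prime) (hs : s ≠ 0) {P : ι → MvPolynomial ι K} (hP : ∀ i m, v ((P i).coeff m) ≤ 1)
    {F : ℙ K (ι → K) → ℙ K (ι → K)} (hFnz : ∀ w, w ≠ 0 → frobeniusLift p s P w ≠ 0)
    (hF : ∀ w (hw : w ≠ 0), F (mk K w hw) = mk K (frobeniusLift p s P w) (hFnz w hw))
    {n : ℕ} (hn : 0 < n) {a b : ι → K} (ha : IsNormalized v a) (hb : IsNormalized v b)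
    (hpa : Function.IsPeriodicPt F n (mk K a ha.ne_zero))
    (hpb : Function.IsPeriodicPt F n (mk K b hb.ne_zero))
    {δ : ℝ} (hpδ : v p ≤ δ) (hδ : δ < 1) (hab : ∀ i, v (a i - b i) ≤ δ) :
    mk K a ha.ne_zero = mk K b hb.ne_zero := by
  set f := frobeniusLift p s P
  have hδ0 : 0 ≤ δ := (v.nonneg _).trans hpδ
  have hnorm {x : ι → K} (hx : IsNormalized v x) (k : ℕ) : IsNormalized v (f^[k] x) :=
    Function.Iterate.rec _ hx (fun _ => isNormalized_frobeniusLift hv hP (hpδ.trans_lt hδ)) k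
  have hrep {x : ι → K} (hx : IsNormalized v x)
      (hpx : Function.IsPeriodicPt F n (mk K x hx.ne_zero)) (k : ℕ) :
      mk K x hx.ne_zero = mk K (f^[n * k] x) (hnorm hx _).ne_zero :=
    (hpx.mul_const k).eq.symm.trans (iterate_map_mk hFnz hF _ _ _)
  refine mk_eq_mk_of_mul_eq_mul _ _ fun i j =>
    sub_eq_zero.1 (v.eq_zero.1 (le_antisymm ?_ (v.nonneg _)))
  have hbound (k : ℕ) : v (a i * b j - a j * b i) ≤ δ ^ k := calc
    v (a i * b j - a j * b i)
        = v (f^[n * k] a i * f^[n * k] b j - f^[n * k] a j * f^[n * k] b i) :=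
      (abv_mul_sub_mul_eq_of_mk_eq ha (hnorm ha _) hb (hnorm hb _) (hrep ha hpa k)
        (hrep hb hpb k) i j).symm
    _ ≤ δ ^ (n * k + 1) := hv.apply_mul_sub_mul_le (hnorm ha _).1
        (abv_iterate_frobeniusLift_sub_le hv hp hs hP ha.1 hb.1 hpδ hδ.le hab _) i j
    _ ≤ δ ^ k := pow_le_pow_of_le_one hδ0 hδ.le (Nat.le_succ_of_le (Nat.le_mul_of_pos_left k hn))
  exact ge_of_tendsto' (tendsto_pow_atTop_nhds_zero_of_lt_one hδ0 hδ) hbound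

end Projective

theorem periodic_eq_equalizer_of_galois_frobenius_lift_general
    {p : ℕ} [Fact p.Prime] (s : ℕ) (hs : 1 ≤ s) {N : ℕ}
    (v : AbsoluteValue (AlgebraicClosure ℚ_[p]) ℝ)
    (hna : ∀ x y : AlgebraicClosure ℚ_[p], v (x + y) ≤ max (v x) (v y))
    (hv : ∀ a : ℚ_[p], v (algebraMap ℚ_[p] (AlgebraicClosure ℚ_[p]) a) = ‖a‖)
    (P : Fin (N + 1) → MvPolynomial (Fin (N + 1)) (AlgebraicClosure ℚ_[p]))
    (hPint : ∀ i m, ∃ c : ℤ_[p],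
      (P i).coeff m = algebraMap ℚ_[p] (AlgebraicClosure ℚ_[p]) (c : ℚ_[p]))
    (F : ℙ (AlgebraicClosure ℚ_[p]) (Fin (N + 1) → AlgebraicClosure ℚ_[p]) →
      ℙ (AlgebraicClosure ℚ_[p]) (Fin (N + 1) → AlgebraicClosure ℚ_[p]))
    (hFnz : ∀ w : Fin (N + 1) → AlgebraicClosure ℚ_[p], w ≠ 0 →
      (fun i => w i ^ p ^ s + (p : AlgebraicClosure ℚ_[p]) * MvPolynomial.eval w (P i)) ≠ 0)
    (hF : ∀ (w : Fin (N + 1) → AlgebraicClosure ℚ_[p]) (hw : w ≠ 0),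
      F (Projectivization.mk (AlgebraicClosure ℚ_[p]) w hw) =
        Projectivization.mk (AlgebraicClosure ℚ_[p])
          (fun i => w i ^ p ^ s + (p : AlgebraicClosure ℚ_[p]) * MvPolynomial.eval w (P i))
          (hFnz w hw))
    (Per : Set (ℙ (AlgebraicClosure ℚ_[p]) (Fin (N + 1) → AlgebraicClosure ℚ_[p])))
    (hPer : ∀ x, x ∈ Per ↔ ∃ n, 1 ≤ n ∧ F^[n] x = x)
    (σ : AlgebraicClosure ℚ_[p] ≃+* AlgebraicClosure ℚ_[p])
    (hσQ : ∀ a : ℚ_[p], σ (algebraMap ℚ_[p] (AlgebraicClosure ℚ_[p]) a) =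
      algebraMap ℚ_[p] (AlgebraicClosure ℚ_[p]) a)
    (hσF : ∀ x : AlgebraicClosure ℚ_[p], v x ≤ 1 → v (σ x - x ^ p ^ s) < 1)
    (σP : ℙ (AlgebraicClosure ℚ_[p]) (Fin (N + 1) → AlgebraicClosure ℚ_[p]) →
      ℙ (AlgebraicClosure ℚ_[p]) (Fin (N + 1) → AlgebraicClosure ℚ_[p]))
    (hσP : ∀ (w : Fin (N + 1) → AlgebraicClosure ℚ_[p]) (hw : w ≠ 0)
      (hw' : (fun i => σ (w i)) ≠ 0),
      σP (Projectivization.mk (AlgebraicClosure ℚ_[p]) w hw) =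
        Projectivization.mk (AlgebraicClosure ℚ_[p]) (fun i => σ (w i)) hw')
    :
    Per = {x | F x = σP x} := by
  have hp := (Fact.out : p.Prime)
  have hvp : v p < 1 := by
    rw [← map_natCast (algebraMap ℚ_[p] (AlgebraicClosure ℚ_[p])), hv]
    exact Padic.norm_p_lt_one
  have hP : ∀ i m, v ((P i).coeff m) ≤ 1 := fun i m => by
    obtain ⟨c, hc⟩ := hPint i m
    rw [hc, hv]
    exact c.norm_le_one
  have hσP' : ∀ i m, σ ((P i).coeff m) = (P i).coeff m := fun i m => by
    obtain ⟨c, hc⟩ := hPint i m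
    rw [hc, hσQ]
  have hσnz : ∀ w : Fin (N + 1) → AlgebraicClosure ℚ_[p], w ≠ 0 → (fun i => σ (w i)) ≠ 0 :=
    fun _ => comp_ne_zero_of_injective σ.injective
  have hcomm : Function.Commute F σP := Projectivization.commute_of_map_mk hFnz hF hσnz
    (fun w hw => hσP w hw _) fun w => (map_frobeniusLift σ hσP' w).symm
  rw [show Per = Function.periodicPts F from Set.ext hPer]
  ext x
  refine ⟨fun hx => ?_,
    Projectivization.mem_periodicPts_of_map_eq (AlgEquiv.ofRingEquiv hσQ) hσP hcomm⟩
  obtain ⟨n, hn, hxn⟩ := Function.mem_periodicPts.1 hx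
  obtain ⟨w, hw, rfl, hwn⟩ := Projectivization.exists_isNormalized_rep v x
  obtain ⟨δ, hpδ, hδ, hδw⟩ := exists_abv_frobeniusLift_sub_le hna hP hvp hσF hwn.1
  rw [Set.mem_ofPred_eq, hF, hσP w hw (hσnz w hw)]
  exact eq_of_isPeriodicPt_of_abv_sub_le hna hp (Nat.one_le_iff_ne_zero.mp hs) hP hFnz hF hn
    (isNormalized_frobeniusLift hna hP hvp hwn) (hwn.comp_of_abv_sub_pow_lt_one hna hσF)
    (hF w hw ▸ hxn.apply) (hσP w hw (hσnz w hw) ▸ hxn.map hcomm.symm) hpδ hδ hδw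

/-- **Lemma 4.7** (Medvedev–Scanlon). For a lift of Frobenius `F` on `ℙ^N` defined over `ℤ_p`
and a Galois lift `σ` of the `q`-power Frobenius, the periodic points of `F` are exactly the
points where `F` agrees with the coordinatewise action of `σ`. -/
theorem periodic_eq_equalizer_of_galois_frobenius_lift
    {p : ℕ} [Fact p.Prime] (s : ℕ) (hs : 1 ≤ s) {N : ℕ}
    (v : AbsoluteValue (AlgebraicClosure ℚ_[p]) ℝ)
    (hna : ∀ x y : AlgebraicClosure ℚ_[p], v (x + y) ≤ max (v x) (v y))
    (hv : ∀ a : ℚ_[p], v (algebraMap ℚ_[p] (AlgebraicClosure ℚ_[p]) a) = ‖a‖)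
    (P : Fin (N + 1) → MvPolynomial (Fin (N + 1)) (AlgebraicClosure ℚ_[p]))
    (hPhom : ∀ i, (P i).IsHomogeneous (p ^ s))
    (hPint : ∀ i m, ∃ c : ℤ_[p],
      (P i).coeff m = algebraMap ℚ_[p] (AlgebraicClosure ℚ_[p]) (c : ℚ_[p]))
    (F : ℙ (AlgebraicClosure ℚ_[p]) (Fin (N + 1) → AlgebraicClosure ℚ_[p]) →
      ℙ (AlgebraicClosure ℚ_[p]) (Fin (N + 1) → AlgebraicClosure ℚ_[p]))
    (hFnz : ∀ w : Fin (N + 1) → AlgebraicClosure ℚ_[p], w ≠ 0 →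
      (fun i => w i ^ p ^ s + (p : AlgebraicClosure ℚ_[p]) * MvPolynomial.eval w (P i)) ≠ 0)
    (hF : ∀ (w : Fin (N + 1) → AlgebraicClosure ℚ_[p]) (hw : w ≠ 0),
      F (Projectivization.mk (AlgebraicClosure ℚ_[p]) w hw) =
        Projectivization.mk (AlgebraicClosure ℚ_[p])
          (fun i => w i ^ p ^ s + (p : AlgebraicClosure ℚ_[p]) * MvPolynomial.eval w (P i))
          (hFnz w hw))
    (Per : Set (ℙ (AlgebraicClosure ℚ_[p]) (Fin (N + 1) → AlgebraicClosure ℚ_[p])))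
    (hPer : ∀ x, x ∈ Per ↔ ∃ n, 1 ≤ n ∧ F^[n] x = x)
    (σ : AlgebraicClosure ℚ_[p] ≃+* AlgebraicClosure ℚ_[p])
    (hσQ : ∀ a : ℚ_[p], σ (algebraMap ℚ_[p] (AlgebraicClosure ℚ_[p]) a) =
      algebraMap ℚ_[p] (AlgebraicClosure ℚ_[p]) a)
    (hσF : ∀ x : AlgebraicClosure ℚ_[p], v x ≤ 1 → v (σ x - x ^ p ^ s) < 1)
    (σP : ℙ (AlgebraicClosure ℚ_[p]) (Fin (N + 1) → AlgebraicClosure ℚ_[p]) →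
      ℙ (AlgebraicClosure ℚ_[p]) (Fin (N + 1) → AlgebraicClosure ℚ_[p]))
    (hσP : ∀ (w : Fin (N + 1) → AlgebraicClosure ℚ_[p]) (hw : w ≠ 0)
      (hw' : (fun i => σ (w i)) ≠ 0),
      σP (Projectivization.mk (AlgebraicClosure ℚ_[p]) w hw) =
        Projectivization.mk (AlgebraicClosure ℚ_[p]) (fun i => σ (w i)) hw')
    :
    Per = {x | F x = σP x} :=
  periodic_eq_equalizer_of_galois_frobenius_lift_general s hs v hna hv P hPint F hFnz hF Per hPer σ
    hσQ hσF σP hσP
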